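/- Let T=(V_T,E_T) be a locally finite tree in which every vertex has degree at least two, and let A ⊆ V_T be a finite set of vertices. Then there exists a collection of Σ_{v∈A} (deg(v) − 2) pairwise edge-disjoint infinite simple paths in T, each starting at a vertex of A. -/

import Mathlib

open MeasureTheory Filter Set
open scoped ENNReal

namespace Percolation

variable {V : Type*}

/-- The graph spanned by the open edges of a configuration `ω : Sym2 V → Bool`. -/
def openGraph (G : SimpleGraph V) (ω : Sym2 V → Bool) : SimpleGraph V where
  Adj u w := G.Adj u w ∧ ω s(u, w) = true
  symm := by
    refine ⟨fun u w h => ?_⟩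
    exact ⟨h.1.symm, by rw [Sym2.eq_swap]; exact h.2⟩
  loopless := ⟨fun u h => G.loopless.irrefl u h.1⟩

/-- The open cluster of the vertex `v` in the configuration `ω`. -/
def cluster (G : SimpleGraph V) (ω : Sym2 V → Bool) (v : V) : Set V :=
  {u | (openGraph G ω).Reachable v u}

/-- The set `E(S)` of edges of `G` with at least one endpoint in `S`. -/
def touchingEdges (G : SimpleGraph V) (S : Set V) : Set (Sym2 V) :=
  {e | e ∈ G.edgeSet ∧ ∃ u ∈ S, u ∈ e}

/-- The set `E(K_v)` of edges of `G` with at least one endpoint in the cluster of `v`. -/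
def clusterEdges (G : SimpleGraph V) (ω : Sym2 V → Bool) (v : V) : Set (Sym2 V) :=
  touchingEdges G (cluster G ω v)

/-- `μ` is the law of Bernoulli-`p` bond percolation on `G`: it is a probability measure on
configurations under which the states of the edges of `G` are independent, each edge being
open with probability `p`.  (This characterizes `μ` on all events depending only on the states
of the edges of `G`.) -/
def IsBernoulli (G : SimpleGraph V) (p : ℝ) (μ : Measure (Sym2 V → Bool)) : Prop :=
  IsProbabilityMeasure μ ∧
    ∀ s : Finset (Sym2 V), ↑s ⊆ G.edgeSet → ∀ f : Sym2 V → Bool,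
      μ {ω | ∀ e ∈ s, ω e = f e} =
        ENNReal.ofReal (p ^ (s.filter fun e => f e = true).card *
          (1 - p) ^ (s.filter fun e => f e = false).card)

/-- The critical probability of `G`. -/
noncomputable def pc (G : SimpleGraph V) : ℝ :=
  sInf {p : ℝ | 0 ≤ p ∧ p ≤ 1 ∧
    ∀ μ : Measure (Sym2 V → Bool), IsBernoulli G p μ →
      μ {ω | ∃ u : V, (cluster G ω u).Infinite} = 1}

/-- `ζ(p) = -limsup (1/n) log P_p(n ≤ E_v < ∞)`, where `μ` is Bernoulli-`p` percolation. -/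
noncomputable def zeta (G : SimpleGraph V) (v : V) (μ : Measure (Sym2 V → Bool)) : ℝ :=
  - Filter.limsup (fun n : ℕ =>
      Real.log (μ {ω | (n : ℕ∞) ≤ (clusterEdges G ω v).encard ∧
        (clusterEdges G ω v).encard < ⊤}).toReal / (n : ℝ)) Filter.atTop

/-- A graph is (vertex-)transitive if its automorphism group acts transitively. -/
def IsTransitive (G : SimpleGraph V) : Prop :=
  ∀ u w : V, ∃ φ : G ≃g G, φ u = w

/-- A graph is quasi-transitive if its automorphism group has finitely many vertex orbits. -/
def IsQuasiTransitive (G : SimpleGraph V) : Prop :=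
  ∃ S : Finset V, ∀ u : V, ∃ φ : G ≃g G, φ u ∈ S

/-- The volume `∑_{u ∈ K} deg(u)` of a set of vertices. -/
noncomputable def vol (G : SimpleGraph V) (K : Set V) : ℝ :=
  ∑ᶠ u ∈ K, ((G.neighborSet u).ncard : ℝ)

/-- The edge boundary `∂_E K`: edges with exactly one endpoint in `K`. -/
def edgeBoundary (G : SimpleGraph V) (K : Set V) : Set (Sym2 V) :=
  {e | e ∈ G.edgeSet ∧ ∃ u w : V, e = s(u, w) ∧ u ∈ K ∧ w ∉ K}

/-- The Cheeger constant `Φ_E(G)`. -/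
noncomputable def cheeger (G : SimpleGraph V) : ℝ :=
  sInf {r : ℝ | ∃ K : Set V, K.Finite ∧ K.Nonempty ∧
    r = ((edgeBoundary G K).ncard : ℝ) / vol G K}

/-- A graph is nonamenable if its Cheeger constant is positive. -/
def Nonamenable (G : SimpleGraph V) : Prop := 0 < cheeger G

/-- The anchored Cheeger constant `Φ*_E` of (the component of `v` in) `H`, anchored at `v`. -/
noncomputable def anchoredCheeger (H : SimpleGraph V) (v : V) : ℝ :=
  ⨆ n : ℕ, sInf {r : ℝ | ∃ K : Set V, v ∈ K ∧ K.Finite ∧ n ≤ K.ncard ∧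
    (SimpleGraph.induce K H).Connected ∧
    r = ((edgeBoundary H K).ncard : ℝ) / vol H K}

/-- The cluster of `v`, viewed as a subgraph of `G`. -/
def clusterSubgraph (G : SimpleGraph V) (ω : Sym2 V → Bool) (v : V) : G.Subgraph where
  verts := cluster G ω v
  Adj u w := (openGraph G ω).Adj u w ∧ u ∈ cluster G ω v ∧ w ∈ cluster G ω v
  adj_sub h := And.left h.1
  edge_vert h := h.2.1
  symm := ⟨fun u w h => ⟨h.1.symm, h.2.2, h.2.1⟩⟩

/-- Membership in `𝓗_v`: finite connected subgraphs of `G` containing `v`. -/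
def HSetMem (G : SimpleGraph V) (v : V) (H : G.Subgraph) : Prop :=
  v ∈ H.verts ∧ H.verts.Finite ∧ H.Connected

/-- `F : 𝓗_v → ℂ` has subexponential growth:
`limsup (1/n) log sup {|F(H)| : H ∈ 𝓗_v, |E(H)| ≤ n} ≤ 0`. -/
def SubexpGrowth (G : SimpleGraph V) (v : V) (F : G.Subgraph → ℂ) : Prop :=
  Filter.limsup (fun n : ℕ =>
    Real.log (sSup {r : ℝ | ∃ H : G.Subgraph, HSetMem G v H ∧
      (touchingEdges G H.verts).ncard ≤ n ∧ r = ‖F H‖}) / (n : ℝ))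
    Filter.atTop ≤ 0

-- The configuration `ω` with the edge `e` opened, i.e. `ω^e`.
open Classical in
noncomputable def updOpen (ω : Sym2 V → Bool) (e : Sym2 V) : Sym2 V → Bool :=
  fun e' => if e' = e then true else ω e'

/-- The fluctuation `h_p(K_v) = p|∂K_v| - (1-p)|E_o(K_v)|` of the cluster of `v`. -/
noncomputable def fluct (G : SimpleGraph V) (p : ℝ) (ω : Sym2 V → Bool) (v : V) : ℝ :=
  p * ({e | e ∈ clusterEdges G ω v ∧ ω e = false}.ncard : ℝ) -
    (1 - p) * ({e | e ∈ clusterEdges G ω v ∧ ω e = true}.ncard : ℝ)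

/-- `Piv(H,v,W)`: edges of `H` whose deletion disconnects `v` from some vertex of `W`. -/
def Piv (H : SimpleGraph V) (v : V) (W : Set V) : Set (Sym2 V) :=
  {e | e ∈ H.edgeSet ∧ ∃ w ∈ W, ¬ (H.deleteEdges {e}).Reachable v w}

/-- `Br_k(K_v, v) = max {|Piv(K_v,v,W)| : W ⊆ K_v, |W| ≤ k}`. -/
noncomputable def Br (G : SimpleGraph V) (ω : Sym2 V → Bool) (v : V) (k : ℕ) : ℕ :=
  sSup {m : ℕ | ∃ W : Finset V, ↑W ⊆ cluster G ω v ∧ W.card ≤ k ∧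
    m = (Piv (openGraph G ω) v ↑W).ncard}

/-- `𝒫_ω(S → ∞)`: the minimal number of edges whose removal disconnects `S` from infinity
in the open subgraph of `ω`. -/
noncomputable def minCut (G : SimpleGraph V) (ω : Sym2 V → Bool) (S : Set V) : ℕ∞ :=
  ⨅ C ∈ {C : Set (Sym2 V) |
    ∀ s ∈ S, {u | ((openGraph G ω).deleteEdges C).Reachable s u}.Finite}, C.encard

/-- `v` is a furcation of `ω`: closing all edges incident to `v` splits the cluster of `v`
into at least three distinct infinite connected components. -/
def IsFurcation (G : SimpleGraph V) (ω : Sym2 V → Bool) (v : V) : Prop :=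
  ∃ u1 u2 u3 : V,
    (openGraph G ω).Adj v u1 ∧ (openGraph G ω).Adj v u2 ∧ (openGraph G ω).Adj v u3 ∧
    ¬ ((openGraph G ω).deleteEdges {e | v ∈ e}).Reachable u1 u2 ∧
    ¬ ((openGraph G ω).deleteEdges {e | v ∈ e}).Reachable u1 u3 ∧
    ¬ ((openGraph G ω).deleteEdges {e | v ∈ e}).Reachable u2 u3 ∧
    {x | ((openGraph G ω).deleteEdges {e | v ∈ e}).Reachable u1 x}.Infinite ∧
    {x | ((openGraph G ω).deleteEdges {e | v ∈ e}).Reachable u2 x}.Infinite ∧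
    {x | ((openGraph G ω).deleteEdges {e | v ∈ e}).Reachable u3 x}.Infinite

-- The `n`-step transition probability of simple random walk on the graph `H`.
open Classical in
noncomputable def walkProb (H : SimpleGraph V) : ℕ → V → V → ℝ
  | 0, u, w => if u = w then 1 else 0
  | n + 1, u, w => ∑ᶠ x ∈ H.neighborSet u, walkProb H n x w / ((H.neighborSet u).ncard : ℝ)

/-- Two vertices are `2`-connected in `H` if they are joined by two edge-disjoint paths. -/
def TwoConn (H : SimpleGraph V) (u w : V) : Prop :=
  ∃ p1 p2 : H.Walk u w, p1.IsPath ∧ p2.IsPath ∧ ∀ e ∈ p1.edges, e ∉ p2.edges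

/-- An edge of `H` is a bridge if deleting it disconnects its endpoints. -/
def IsBridgeOf (H : SimpleGraph V) (e : Sym2 V) : Prop :=
  e ∈ H.edgeSet ∧ ∃ u w : V, e = s(u, w) ∧ ¬ (H.deleteEdges {e}).Reachable u w

/-- `w` represents a leaf of the tree `Tr(K_v)` of `2`-connected components of the cluster of
`v`: it lies in the cluster, its `2`-connected component differs from that of `v`, and exactly
one bridge is incident to its `2`-connected component. -/
def IsTrLeaf (G : SimpleGraph V) (ω : Sym2 V → Bool) (v w : V) : Prop :=
  w ∈ cluster G ω v ∧ ¬ TwoConn (openGraph G ω) v w ∧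
    {e : Sym2 V | IsBridgeOf (openGraph G ω) e ∧
      ∃ x ∈ e, TwoConn (openGraph G ω) x w}.encard = 1

/-- `Lf_k(K_v, v)`: the maximum number of edges in a subgraph of `Tr(K_v)` spanned by the
union of the geodesics between the `2`-connected component of `v` and exactly `k` leaves
(`0` if `Tr(K_v)` has fewer than `k` leaves).  The tree edges of such a spanned subgraph are
exactly the bridges separating `v` from one of the chosen leaf representatives. -/
noncomputable def Lf (G : SimpleGraph V) (ω : Sym2 V → Bool) (v : V) (k : ℕ) : ℕ :=
  sSup {m : ℕ | ∃ w : Fin k → V, (∀ i, IsTrLeaf G ω v (w i)) ∧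
    (∀ i j : Fin k, i ≠ j → ¬ TwoConn (openGraph G ω) (w i) (w j)) ∧
    m = (⋃ i, Piv (openGraph G ω) v {w i}).ncard}

/-- `Q_k(p,n,m)`: the supremum over all countable locally finite graphs `G` and vertices `v`
of `P_p(Lf_k(K_v,v) = m and E_v = n)`. -/
noncomputable def Qk (k : ℕ) (p : ℝ) (n m : ℕ) : ℝ :=
  sSup {r : ℝ | ∃ (W : Type) (_ : Countable W) (G : SimpleGraph W) (v : W),
    (∀ u : W, (G.neighborSet u).Finite) ∧
    ∃ μ : Measure (Sym2 W → Bool), IsBernoulli G p μ ∧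
      r = (μ {ω | Lf G ω v k = m ∧ (clusterEdges G ω v).encard = (n : ℕ∞)}).toReal}

/-- `α(p) = sup {α ∈ [0,p] : α^{-α} (1-α)^{-(1-α)} (p/(1-p))^α < e^{ζ(p)}}`. -/
noncomputable def alphaP (G : SimpleGraph V) (v : V) (p : ℝ)
    (μ : Measure (Sym2 V → Bool)) : ℝ :=
  sSup {α : ℝ | 0 ≤ α ∧ α ≤ p ∧
    α ^ (-α) * (1 - α) ^ (-(1 - α)) * (p / (1 - p)) ^ α < Real.exp (zeta G v μ)}

/-! Root `T` at a vertex `r` and choose for every vertex `y` a child `d y`, that is, a neighbour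
farther from `r`; it exists because only one neighbour of `y` (its parent) is not a child and
`y` has at least two neighbours. For a vertex `x` and a child `c ≠ d x` of `x`, the ray that
takes the edge `x c` and then always moves to the chosen child goes strictly away from `r`, and
every `x` has at least `deg x - 2` such children `c`. If two of these rays share an edge, then,
parents being unique, they can be traced back together until one of them reaches its first edge;
at that point the other ray moves to a chosen child, which forces both first edges to coincide. -/

theorem _root_.SimpleGraph.IsTree.eq_of_adj_of_dist_add_one_eq {T : SimpleGraph V}
    (hT : T.IsTree) (r : V) {a b y : V} (ha : T.Adj a y) (hb : T.Adj b y)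
    (hda : T.dist r a + 1 = T.dist r y) (hdb : T.dist r b + 1 = T.dist r y) : a = b := by
  classical
  obtain ⟨p, hp, -⟩ := hT.connected.exists_path_of_dist r y
  have mem : ∀ z, T.Adj z y → T.dist r z + 1 = T.dist r y → z = p.penultimate := by
    intro z hz hdz
    obtain ⟨q, hq, hql⟩ := hT.connected.exists_path_of_dist r z
    have hy : y ∉ q.support := fun hy => by
      have := (SimpleGraph.dist_le (q.takeUntil y hy)).trans (q.length_takeUntil_le_length hy)
      omega
    exact hT.isAcyclic.eq_penultimate_of_adj_end hp hz.symm
      (hT.isAcyclic.mem_support_of_ne_mem_support_of_adj_of_isPath hp hq hz.symm hy)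
  rw [mem a ha hda, mem b hb hdb]

section RootedTree

def childSet (T : SimpleGraph V) (r x : V) : Set V :=
  {c | T.Adj x c ∧ T.dist r c = T.dist r x + 1}

variable {T : SimpleGraph V} (r : V)

theorem ncard_neighborSet_le_ncard_childSet_add_one (hT : T.IsTree) (x : V) :
    (T.neighborSet x).ncard ≤ (childSet T r x).ncard + 1 := by
  have hparent : (T.neighborSet x \ childSet T r x).Subsingleton := by
    rintro a ⟨ha, ha'⟩ b ⟨hb, hb'⟩
    have hda := (hT.dist_eq_dist_add_one_of_adj r ha).resolve_right fun h => ha' ⟨ha, h⟩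
    have hdb := (hT.dist_eq_dist_add_one_of_adj r hb).resolve_right fun h => hb' ⟨hb, h⟩
    exact hT.eq_of_adj_of_dist_add_one_eq r (SimpleGraph.Adj.symm ha) (SimpleGraph.Adj.symm hb)
      hda.symm hdb.symm
  have hsub : childSet T r x ⊆ T.neighborSet x := fun c hc => hc.1
  calc (T.neighborSet x).ncard
      ≤ (T.neighborSet x \ (T.neighborSet x \ childSet T r x)).ncard +
          (T.neighborSet x \ childSet T r x).ncard :=
        ncard_le_ncard_sdiff_add_ncard _ _ hparent.finite
    _ ≤ (childSet T r x).ncard + 1 := by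
        rw [sdiff_sdiff_cancel_left hsub]
        exact Nat.add_le_add_left ((ncard_le_one hparent.finite).mpr hparent) _

theorem ncard_neighborSet_sub_two_le (hT : T.IsTree) (x y : V) :
    (T.neighborSet x).ncard - 2 ≤ (childSet T r x \ {y}).ncard := by
  have := ncard_neighborSet_le_ncard_childSet_add_one r hT x
  have := pred_ncard_le_ncard_sdiff_singleton (childSet T r x) y
  omega

def descendingRay (d : V → V) (x c : V) : ℕ → V
  | 0 => x
  | n + 1 => d^[n] c

theorem descendingRay_succ_succ (d : V → V) (x c : V) (n : ℕ) :
    descendingRay d x c (n + 2) = d (descendingRay d x c (n + 1)) :=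
  Function.iterate_succ_apply' d n c

variable {r} {d : V → V}

theorem descendingRay_succ_mem_childSet (hd : ∀ y, d y ∈ childSet T r y) {x c : V}
    (hc : c ∈ childSet T r x) :
    ∀ n, descendingRay d x c (n + 1) ∈ childSet T r (descendingRay d x c n)
  | 0 => hc
  | n + 1 => by rw [descendingRay_succ_succ]; exact hd _

theorem dist_descendingRay (hd : ∀ y, d y ∈ childSet T r y) {x c : V}
    (hc : c ∈ childSet T r x) (n : ℕ) :
    T.dist r (descendingRay d x c n) = T.dist r x + n := by
  induction n with
  | zero => rfl
  | succ n ih => rw [(descendingRay_succ_mem_childSet hd hc n).2, ih, add_assoc]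

theorem descendingRay_injective (hd : ∀ y, d y ∈ childSet T r y) {x c : V}
    (hc : c ∈ childSet T r x) :
    Function.Injective (descendingRay d x c) := fun m n h => by
  have := congrArg (T.dist r) h
  rwa [dist_descendingRay hd hc, dist_descendingRay hd hc, Nat.add_left_cancel_iff] at this

theorem eq_of_descendingRay_eq_of_succ_eq (hd : ∀ y, d y ∈ childSet T r y) (hT : T.IsTree)
    {x c x' c' : V} (hc : c ∈ childSet T r x) (hc' : c' ∈ childSet T r x')
    (hcd : c ≠ d x) (hcd' : c' ≠ d x') :
    ∀ {m n : ℕ}, descendingRay d x c m = descendingRay d x' c' n →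
      descendingRay d x c (m + 1) = descendingRay d x' c' (n + 1) → x = x' ∧ c = c'
  | 0, 0, h₀, h₁ => ⟨h₀, h₁⟩
  | 0, n + 1, h₀, h₁ => absurd (h₁.trans (by rw [descendingRay_succ_succ, ← h₀]; rfl)) hcd
  | m + 1, 0, h₀, h₁ => absurd (h₁.symm.trans (by rw [descendingRay_succ_succ, h₀]; rfl)) hcd'
  | m + 1, n + 1, h₀, h₁ => by
    have hP := descendingRay_succ_mem_childSet hd hc m
    have hQ := descendingRay_succ_mem_childSet hd hc' n
    rw [h₀] at hP
    refine eq_of_descendingRay_eq_of_succ_eq hd hT hc hc' hcd hcd' ?_ h₀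
    exact hT.eq_of_adj_of_dist_add_one_eq r hP.1 hQ.1 hP.2.symm hQ.2.symm

theorem eq_of_descendingRay_edge_eq (hd : ∀ y, d y ∈ childSet T r y) (hT : T.IsTree)
    {x c x' c' : V} (hc : c ∈ childSet T r x) (hc' : c' ∈ childSet T r x')
    (hcd : c ≠ d x) (hcd' : c' ≠ d x')
    {m n : ℕ} (h : s(descendingRay d x c m, descendingRay d x c (m + 1)) =
      s(descendingRay d x' c' n, descendingRay d x' c' (n + 1))) : x = x' ∧ c = c' := by
  rcases Sym2.eq_iff.mp h with ⟨h₀, h₁⟩ | ⟨h₀, h₁⟩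
  · exact eq_of_descendingRay_eq_of_succ_eq hd hT hc hc' hcd hcd' h₀ h₁
  · have d₀ := congrArg (T.dist r) h₀
    have d₁ := congrArg (T.dist r) h₁
    simp only [dist_descendingRay hd hc, dist_descendingRay hd hc'] at d₀ d₁
    omega

end RootedTree

theorem tree_edge_disjoint_rays_general
    {V : Type*} (T : SimpleGraph V) (hT : T.IsTree)
    (hdeg : ∀ u : V, 2 ≤ (T.neighborSet u).ncard) (A : Finset V) :
    ∃ P : Fin (∑ u ∈ A, ((T.neighborSet u).ncard - 2)) → ℕ → V,
      (∀ i, P i 0 ∈ A) ∧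
      (∀ i, Function.Injective (P i)) ∧
      (∀ i n, T.Adj (P i n) (P i (n + 1))) ∧
      (∀ i j, i ≠ j → ∀ m n : ℕ, s(P i m, P i (m + 1)) ≠ s(P j n, P j (n + 1))) := by
  obtain ⟨r⟩ := hT.connected.nonempty
  choose d hd using fun y => nonempty_of_ncard_ne_zero (s := childSet T r y)
    (by linarith [hdeg y, ncard_neighborSet_le_ncard_childSet_add_one r hT y])
  have hfin : ∀ w, (childSet T r w \ {d w}).Finite := fun w =>
    (finite_of_ncard_pos (s := T.neighborSet w) (by linarith [hdeg w])).subset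
      fun _ hc => hc.1.1
  let S := A.sigma fun w => (hfin w).toFinset
  have hS : ∑ u ∈ A, ((T.neighborSet u).ncard - 2) ≤ S.card := by
    rw [Finset.card_sigma]
    refine Finset.sum_le_sum fun w _ => ?_
    rw [← ncard_eq_toFinset_card _ (hfin w)]
    exact ncard_neighborSet_sub_two_le r hT w (d w)
  obtain ⟨e⟩ := Function.Embedding.nonempty_of_card_le (α := Fin _) (β := S) (by simpa using hS)
  have he : ∀ i, (e i).1.1 ∈ A ∧ (e i).1.2 ∈ childSet T r (e i).1.1 \ {d (e i).1.1} :=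
    fun i => by simpa only [S, Finset.mem_sigma, Finite.mem_toFinset] using (e i).2
  refine ⟨fun i => descendingRay d (e i).1.1 (e i).1.2, fun i => (he i).1,
    fun i => descendingRay_injective hd (he i).2.1,
    fun i n => (descendingRay_succ_mem_childSet hd (he i).2.1 n).1, fun i j hij m n h => hij ?_⟩
  obtain ⟨hx, hc⟩ :=
    eq_of_descendingRay_edge_eq hd hT (he i).2.1 (he j).2.1 (he i).2.2 (he j).2.2 h
  exact e.injective (Subtype.ext (Sigma.ext hx (heq_of_eq hc)))

/-- **Lemma 2.6.**  Let `T` be a locally finite tree in which every vertex has degree at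
least two and let `A` be a finite set of vertices.  Then there are
`∑_{v ∈ A} (deg(v) - 2)` pairwise edge-disjoint infinite simple paths in `T`, each starting
at a vertex of `A`. -/
theorem tree_edge_disjoint_rays
    {V : Type*} (T : SimpleGraph V) (hT : T.IsTree)
    (hlf : ∀ u : V, (T.neighborSet u).Finite)
    (hdeg : ∀ u : V, 2 ≤ (T.neighborSet u).ncard) (A : Finset V) :
    ∃ P : Fin (∑ u ∈ A, ((T.neighborSet u).ncard - 2)) → ℕ → V,
      (∀ i, P i 0 ∈ A) ∧
      (∀ i, Function.Injective (P i)) ∧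
      (∀ i n, T.Adj (P i n) (P i (n + 1))) ∧
      (∀ i j, i ≠ j → ∀ m n : ℕ, s(P i m, P i (m + 1)) ≠ s(P j n, P j (n + 1))) :=
  tree_edge_disjoint_rays_general T hT hdeg A

end Percolation
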